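/- Let a, b, c be real numbers with a < 0. Then |a x^2 + b x + c| < 4 for all x with |x| < 1 if and only if: c - b + a + 4 ≥ 0, c - b + a - 4 ≤ 0, c + b + a + 4 ≥ 0, c + b + a - 4 ≤ 0, and (b - 2a ≤ 0 or b + 2a ≥ 0 or 4ac - b^2 - 16a > 0). -/
import Mathlib


theorem stmt_0 (a b c : ℝ) (ha : a < 0) :
    (∀ x : ℝ, |x| < 1 → |a * x ^ 2 + b * x + c| < 4) ↔
    (c - b + a + 4 ≥ 0 ∧ c - b + a - 4 ≤ 0 ∧ c + b + a + 4 ≥ 0 ∧ c + b + a - 4 ≤ 0 ∧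
      (b - 2 * a ≤ 0 ∨ b + 2 * a ≥ 0 ∨ 4 * a * c - b ^ 2 - 16 * a > 0)) := by
  constructor
  · intro h
    -- extend to closed interval by continuity
    have hclosed : IsClosed {x : ℝ | |a * x ^ 2 + b * x + c| ≤ 4} := by
      apply isClosed_le
      · exact (Continuous.abs (by continuity))
      · exact continuous_const
    have hsub : Set.Ioo (-1 : ℝ) 1 ⊆ {x : ℝ | |a * x ^ 2 + b * x + c| ≤ 4} := by
      intro x hx
      exact (h x (abs_lt.mpr ⟨hx.1, hx.2⟩)).le
    have hIcc : Set.Icc (-1 : ℝ) 1 ⊆ {x : ℝ | |a * x ^ 2 + b * x + c| ≤ 4} := by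
      have : closure (Set.Ioo (-1 : ℝ) 1) = Set.Icc (-1 : ℝ) 1 :=
        closure_Ioo (by norm_num)
      rw [← this]
      exact hclosed.closure_subset_iff.mpr hsub
    have hm1 : |a * (-1 : ℝ) ^ 2 + b * (-1) + c| ≤ 4 := hIcc (by norm_num)
    have hp1 : |a * (1 : ℝ) ^ 2 + b * 1 + c| ≤ 4 := hIcc (by norm_num)
    rw [abs_le] at hm1 hp1
    norm_num at hm1 hp1
    refine ⟨by linarith [hm1.1], by linarith [hm1.2], by linarith [hp1.1], by linarith [hp1.2], ?_⟩
    by_cases hb1 : b - 2 * a ≤ 0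
    · exact Or.inl hb1
    by_cases hb2 : b + 2 * a ≥ 0
    · exact Or.inr (Or.inl hb2)
    push_neg at hb1 hb2
    right; right
    set t : ℝ := -b / (2 * a) with hts
    have h2a : (2 : ℝ) * a < 0 := by linarith
    have ht : t * (2 * a) = -b := div_mul_cancel₀ _ (ne_of_lt h2a)
    have habs : |t| < 1 := by
      rw [abs_lt]
      constructor <;> nlinarith [ht]
    have := h t habs
    rw [abs_lt] at this
    nlinarith [this.2, sq_nonneg (t * (2 * a)), ht]
  · rintro ⟨h1, h2, h3, h4, h5⟩ x hx
    obtain ⟨hx1, hx2⟩ := abs_lt.mp hx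
    rw [abs_lt]
    constructor
    · -- lower bound from concavity
      nlinarith [mul_nonneg (show (0:ℝ) ≤ 1 + x by linarith) h3,
        mul_nonneg (show (0:ℝ) ≤ 1 - x by linarith) h1,
        mul_pos_of_neg_of_neg ha (show x ^ 2 - 1 < 0 by nlinarith)]
    · rcases h5 with h5 | h5 | h5
      · -- decreasing on the interval
        nlinarith [mul_pos (show (0:ℝ) < x + 1 by linarith)
          (show (0:ℝ) < a - a * x - b by nlinarith [mul_pos (show (0:ℝ) < -a by linarith) (show (0:ℝ) < 1 + x by linarith)])]
      · -- increasing on the interval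
        nlinarith [mul_pos (show (0:ℝ) < 1 - x by linarith)
          (show (0:ℝ) < a * (1 + x) + b by nlinarith [mul_pos (show (0:ℝ) < -a by linarith) (show (0:ℝ) < 1 - x by linarith)])]
      · -- vertex bound
        nlinarith [sq_nonneg (2 * a * x + b)]
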